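/- For the error dynamics c̃' = -k_c c̃, τ̃ᵢ' = Tᵢᵀν·χ̃ᵢ - k_τᵢ τ̃ᵢ, χ̃ᵢ' = Xᵢᵀν(χᵢ + χ̂ᵢ)χ̃ᵢ - k_χᵢ(Tᵢᵀν)ᵀτ̃ᵢ, the Lyapunov function V = ½Σᵢ(‖τ̃ᵢ‖² + χ̃ᵢ²/k_χᵢ) + ½‖c̃‖² has time derivative V' = -k_c‖c̃‖² + Σᵢ(-k_τᵢ‖τ̃ᵢ‖² + (1/k_χᵢ)(Xᵢᵀν)(χᵢ + χ̂ᵢ)χ̃ᵢ²). -/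

import Mathlib

/-!
Each pair `(τ̃ᵢ, χ̃ᵢ)` is coupled skew-symmetrically: `χ̃ᵢ w` enters `τ̃ᵢ'` while
`-k_χᵢ ⟪τ̃ᵢ, w⟫` enters `χ̃ᵢ'`, with `w = Tᵢᵀν`. Weighting `χ̃ᵢ²` by `1/k_χᵢ` makes the two
cross terms in the derivative of `‖τ̃ᵢ‖² + χ̃ᵢ²/k_χᵢ` cancel, leaving only the damping and
the `χ̃ᵢ²` terms.
-/

open Matrix Finset
open scoped InnerProductSpace

theorem EuclideanSpace.inner_equiv_symm_eq_dotProduct {n : Type*} [Fintype n]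
    (x : EuclideanSpace ℝ n) (v : n → ℝ) : ⟪x, (WithLp.equiv 2 (n → ℝ)).symm v⟫_ℝ = v ⬝ᵥ x := by
  rw [EuclideanSpace.inner_eq_star_dotProduct]
  rfl

section

variable {E : Type*} [NormedAddCommGroup E] [InnerProductSpace ℝ E]

theorem HasDerivAt.norm_sq_of_linear_decay {c : ℝ → E} {k t : ℝ}
    (hc : HasDerivAt c (-k • c t) t) :
    HasDerivAt (fun s => ‖c s‖ ^ 2) (2 * (-k * ‖c t‖ ^ 2)) t := by
  refine hc.norm_sq.congr_deriv ?_
  rw [inner_smul_right, real_inner_self_eq_norm_sq]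

theorem HasDerivAt.norm_sq_add_sq_div_of_skew_coupling {τ : ℝ → E} {χ : ℝ → ℝ} {w : E}
    {a kτ kχ t : ℝ} (hkχ : kχ ≠ 0)
    (hτ : HasDerivAt τ (χ t • w - kτ • τ t) t)
    (hχ : HasDerivAt χ (a * χ t - kχ * ⟪τ t, w⟫_ℝ) t) :
    HasDerivAt (fun s => ‖τ s‖ ^ 2 + χ s ^ 2 / kχ)
      (2 * (-kτ * ‖τ t‖ ^ 2 + 1 / kχ * a * χ t ^ 2)) t := by
  refine (hτ.norm_sq.add ((hχ.pow 2).div_const kχ)).congr_deriv ?_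
  rw [inner_sub_right, inner_smul_right, inner_smul_right, real_inner_self_eq_norm_sq]
  field_simp
  push_cast
  ring

end

theorem lyapunov_derivative_multiline_general (N : ℕ)
    (τe : Fin N → ℝ → EuclideanSpace ℝ (Fin 2))
    (χe χ χhat : Fin N → ℝ → ℝ)
    (ce : ℝ → EuclideanSpace ℝ (Fin 3))
    (T : Fin N → ℝ → Matrix (Fin 3) (Fin 2) ℝ)
    (X : Fin N → ℝ → EuclideanSpace ℝ (Fin 3))
    (ν : ℝ → EuclideanSpace ℝ (Fin 3))
    (kc : ℝ) (kτ kχ : Fin N → ℝ)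
    (hkχ : ∀ i, 0 < kχ i)
    (hc : ∀ t, HasDerivAt ce (-kc • ce t) t)
    (hτ : ∀ i t, HasDerivAt (τe i)
      (χe i t • (WithLp.equiv 2 (Fin 2 → ℝ)).symm ((T i t)ᵀ.mulVec (ν t)) - kτ i • τe i t) t)
    (hχ : ∀ i t, HasDerivAt (χe i)
      ((X i t ⬝ᵥ ν t) * (χ i t + χhat i t) * χe i t
        - kχ i * ((T i t)ᵀ.mulVec (ν t) ⬝ᵥ τe i t)) t) :
    ∀ t, HasDerivAt
      (fun s => (1 / 2) * ∑ i, (‖τe i s‖ ^ 2 + χe i s ^ 2 / kχ i)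
        + (1 / 2) * ‖ce s‖ ^ 2)
      (-kc * ‖ce t‖ ^ 2 + ∑ i, (-kτ i * ‖τe i t‖ ^ 2
        + (1 / kχ i) * (X i t ⬝ᵥ ν t) * (χ i t + χhat i t) * χe i t ^ 2)) t := by
  intro t
  have hpair (i : Fin N) := (hτ i t).norm_sq_add_sq_div_of_skew_coupling
    (a := (X i t ⬝ᵥ ν t) * (χ i t + χhat i t)) (hkχ i).ne' <| by
      rw [EuclideanSpace.inner_equiv_symm_eq_dotProduct]; exact hχ i t
  have hsum := HasDerivAt.fun_sum (u := univ) fun i _ => hpair i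
  have hce := (hc t).norm_sq_of_linear_decay
  refine ((hsum.const_mul (1 / 2)).add (hce.const_mul (1 / 2))).congr_deriv ?_
  simp only [← mul_sum, mul_assoc]
  ring

/-- For the multi-line observer error dynamics
`c̃' = -k_c c̃`, `τ̃ᵢ' = (Tᵢᵀν) χ̃ᵢ - k_τᵢ τ̃ᵢ`,
`χ̃ᵢ' = (Xᵢᵀν)(χᵢ + χ̂ᵢ) χ̃ᵢ - k_χᵢ (Tᵢᵀν)ᵀ τ̃ᵢ`,
the Lyapunov function `V = ½ Σᵢ (‖τ̃ᵢ‖² + χ̃ᵢ²/k_χᵢ) + ½‖c̃‖²` has time derivative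
`V' = -k_c ‖c̃‖² + Σᵢ (-k_τᵢ ‖τ̃ᵢ‖² + (1/k_χᵢ)(Xᵢᵀν)(χᵢ + χ̂ᵢ) χ̃ᵢ²)`. -/
theorem lyapunov_derivative_multiline (N : ℕ)
    (τe : Fin N → ℝ → EuclideanSpace ℝ (Fin 2))
    (χe χ χhat : Fin N → ℝ → ℝ)
    (ce : ℝ → EuclideanSpace ℝ (Fin 3))
    (T : Fin N → ℝ → Matrix (Fin 3) (Fin 2) ℝ)
    (X : Fin N → ℝ → EuclideanSpace ℝ (Fin 3))
    (ν : ℝ → EuclideanSpace ℝ (Fin 3))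
    (kc : ℝ) (kτ kχ : Fin N → ℝ)
    (hkc : 0 < kc) (hkτ : ∀ i, 0 < kτ i) (hkχ : ∀ i, 0 < kχ i)
    (hc : ∀ t, HasDerivAt ce (-kc • ce t) t)
    (hτ : ∀ i t, HasDerivAt (τe i)
      (χe i t • (WithLp.equiv 2 (Fin 2 → ℝ)).symm ((T i t)ᵀ.mulVec (ν t)) - kτ i • τe i t) t)
    (hχ : ∀ i t, HasDerivAt (χe i)
      ((X i t ⬝ᵥ ν t) * (χ i t + χhat i t) * χe i t
        - kχ i * ((T i t)ᵀ.mulVec (ν t) ⬝ᵥ τe i t)) t) :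
    ∀ t, HasDerivAt
      (fun s => (1 / 2) * ∑ i, (‖τe i s‖ ^ 2 + χe i s ^ 2 / kχ i)
        + (1 / 2) * ‖ce s‖ ^ 2)
      (-kc * ‖ce t‖ ^ 2 + ∑ i, (-kτ i * ‖τe i t‖ ^ 2
        + (1 / kχ i) * (X i t ⬝ᵥ ν t) * (χ i t + χhat i t) * χe i t ^ 2)) t :=
  lyapunov_derivative_multiline_general N τe χe χ χhat ce T X ν kc kτ kχ hkχ hc hτ hχ
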